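/- Let G = (U, V, E) be a bipartite graph, F ⊆ E, E_c the committed edges, E_u the uncommitted edges. If E_c admits an (A, B, C)-free bipartition (E_r, E_b) with F ∩ E_c ⊆ E_b, then G has a 2-chain subgraph cover (G_1, G_2) such that G_1 has no edges in F. -/

import Mathlib

/-- Two edges (u1,v1), (u2,v2) are in conflict in the bipartite graph with
edge relation `E`: both are edges and both cross pairs are non-edges. -/
def Confl {U V : Type*} (E : U → V → Prop) (u1 : U) (v1 : V) (u2 : U) (v2 : V) : Prop :=
  E u1 v1 ∧ E u2 v2 ∧ ¬E u1 v2 ∧ ¬E u2 v1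

/-- A bipartite graph (given by its edge relation) has no induced 2K2. -/
def NoInduced2K2 {U V : Type*} (E : U → V → Prop) : Prop :=
  ¬ ∃ u1 u2 v1 v2, E u1 v1 ∧ E u2 v2 ∧ ¬E u1 v2 ∧ ¬E u2 v1

/-- An edge is committed if it is in conflict with another edge. -/
def Committed {U V : Type*} (E : U → V → Prop) (u : U) (v : V) : Prop :=
  ∃ u' v', Confl E u v u' v'

/-- An alternating cycle of `M` relative to the graph with edges `E`, of length `2k`. -/
def AltCycleK {U V : Type*} (E M : U → V → Prop) (k : ℕ) : Prop :=
  ∃ (u : ZMod k → U) (v : ZMod k → V), Function.Injective u ∧ Function.Injective v ∧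
    ∀ i : ZMod k, ¬E (u i) (v i) ∧ M (u (i + 1)) (v i)

/-- An alternating cycle of `M` relative to `E` (some length `2k`, `k ≥ 2`). -/
def AltCycle {U V : Type*} (E M : U → V → Prop) : Prop :=
  ∃ k : ℕ, 2 ≤ k ∧ AltCycleK E M k

/-- `(Er, Eb)` is a bipartition of the committed edges of `E`. -/
def Bipartition {U V : Type*} (E Er Eb : U → V → Prop) : Prop :=
  (∀ u v, Committed E u v ↔ (Er u v ∨ Eb u v)) ∧ ∀ u v, ¬(Er u v ∧ Eb u v)

/-- No configuration (A1): no two conflicting edges both in `Er`. -/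
def NoA1 {U V : Type*} (E Er : U → V → Prop) : Prop :=
  ¬ ∃ u1 u2 v1 v2, Er u1 v1 ∧ Er u2 v2 ∧ ¬E u1 v2 ∧ ¬E u2 v1

/-- No configuration (B1): no `u1v1, u2v2 ∈ Er`, `u2v1 ∈ Eb`, `u1v2 ∉ E`. -/
def NoB1 {U V : Type*} (E Er Eb : U → V → Prop) : Prop :=
  ¬ ∃ u1 u2 v1 v2, Er u1 v1 ∧ Er u2 v2 ∧ Eb u2 v1 ∧ ¬E u1 v2

/-- No configuration (C): no `u1v1, u2v2 ∈ Er`, `u1v2 ∉ E`, `u2v1 ∈ F`. -/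
def NoC {U V : Type*} (E F Er : U → V → Prop) : Prop :=
  ¬ ∃ u1 u2 v1 v2, Er u1 v1 ∧ Er u2 v2 ∧ ¬E u1 v2 ∧ F u2 v1

/-- `(Er, Eb)` is (A, C)-free. -/
def ACFree {U V : Type*} (E F Er Eb : U → V → Prop) : Prop :=
  NoA1 E Er ∧ NoA1 E Eb ∧ NoC E F Er

/-- `(Er, Eb)` is (A, B, C)-free. -/
def ABCFree {U V : Type*} (E F Er Eb : U → V → Prop) : Prop :=
  ACFree E F Er Eb ∧ NoB1 E Er Eb ∧ NoB1 E Eb Er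

/-- `(E1, E2)` is a 2-chain subgraph cover of the bipartite graph with edge set `E`. -/
def ChainCover {U V : Type*} (E E1 E2 : U → V → Prop) : Prop :=
  (∀ u v, E1 u v → E u v) ∧ (∀ u v, E2 u v → E u v) ∧
  (∀ u v, E u v ↔ E1 u v ∨ E2 u v) ∧ NoInduced2K2 E1 ∧ NoInduced2K2 E2

/-!
A chain graph `E₁` with `M ⊆ E₁ ⊆ E'` exists as soon as the relation "some `M`-neighbour of `a`
is an `E'`-non-neighbour of `b`" is acyclic: rank the vertices along it and give every vertex the
`M`-neighbourhoods of all vertices of no larger rank. We take `G₁` between the red edges and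
`E \ F`, and `G₂` between `E \ E_r` and `E`; together they cover `E`. On a finite vertex set a
shortest cycle of the relation is an induced alternating cycle, and (A, B, C)-freeness excludes
these. For `G₁` an `F`-edge `x (i+1) v i` on such a cycle leads, through the blue edges
conflicting with the red edges `x i v i` and `x (i+1) v (i+1)`, to a forbidden configuration.
Otherwise, for `G₁` as for `G₂`, the edges `x i v i` of the cycle get one colour and all its other
edges the other, which (A) and (B) forbid.
-/

section ClosedWalk

variable {α : Type*} {S : α → α → Prop}

def IsClosedWalk (S : α → α → Prop) {k : ℕ} (x : ZMod k → α) : Prop :=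
  ∀ t, S (x t) (x (t + 1))

def IsInducedCycle (S : α → α → Prop) {k : ℕ} (x : ZMod k → α) : Prop :=
  ∀ s t, S (x s) (x t) ↔ t = s + 1

lemma isClosedWalk_of_path {m : ℕ} [NeZero m] {p : ℕ → α}
    (hp : ∀ n, n + 1 < m → S (p n) (p (n + 1))) (hclose : S (p (m - 1)) (p 0)) :
    IsClosedWalk S fun t : ZMod m => p t.val := by
  intro t
  show S (p t.val) (p (t + 1).val)
  have hsucc : (t + 1).val = (t.val + 1) % m := by
    rw [ZMod.val_add, ZMod.val_one_eq_one_mod, Nat.add_mod_mod]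
  rcases Nat.lt_or_ge (t.val + 1) m with h | h
  · rw [hsucc, Nat.mod_eq_of_lt h]
    exact hp _ h
  · have hlast : t.val = m - 1 := by have := ZMod.val_lt t; omega
    rw [hsucc, hlast, Nat.sub_add_cancel NeZero.one_le, Nat.mod_self]
    exact hclose

lemma exists_closedWalk_of_not_wellFounded [Finite α] (h : ¬WellFounded (flip S)) :
    ∃ k, 0 < k ∧ ∃ x : ZMod k → α, IsClosedWalk S x := by
  rw [wellFounded_iff_isEmpty_descending_chain, not_isEmpty_iff] at h
  obtain ⟨f, hf⟩ := h
  obtain ⟨i, j, hij, hfij⟩ := Finite.exists_ne_map_eq_of_infinite f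
  wlog hlt : i < j generalizing i j
  · exact this j i hij.symm hfij.symm (by omega)
  have : NeZero (j - i) := ⟨by omega⟩
  refine ⟨j - i, by omega, _, isClosedWalk_of_path (p := fun n => f (i + n))
    (fun n _ => hf (i + n)) ?_⟩
  have hstep : S (f (i + (j - i - 1))) (f (i + (j - i - 1) + 1)) := hf _
  rwa [show i + (j - i - 1) + 1 = j by omega, ← hfij] at hstep

lemma IsClosedWalk.exists_shorter {k : ℕ} [NeZero k] {x : ZMod k → α} (hx : IsClosedWalk S x)
    {s t : ZMod k} (hst : S (x s) (x t)) (hne : t ≠ s + 1) :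
    ∃ m, 0 < m ∧ m < k ∧ ∃ y : ZMod m → α, IsClosedWalk S y := by
  refine ⟨(s - t).val + 1, by omega, ?_, _, isClosedWalk_of_path (p := fun n => x (t + n))
    (fun n _ => by simpa only [Nat.cast_succ, add_assoc] using hx (t + n)) ?_⟩
  · refine lt_of_le_of_ne (ZMod.val_lt _) fun hk => hne ?_
    have h0 : (((s - t).val + 1 : ℕ) : ZMod k) = 0 := by rw [hk, ZMod.natCast_self]
    push_cast [ZMod.natCast_zmod_val] at h0
    linear_combination -h0
  · simpa [ZMod.natCast_zmod_val] using hst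

/-- A shortest closed walk has no chords. -/
lemma exists_isInducedCycle (h : ∃ k, 0 < k ∧ ∃ x : ZMod k → α, IsClosedWalk S x) :
    ∃ k, 0 < k ∧ ∃ x : ZMod k → α, IsInducedCycle S x := by
  classical
  obtain ⟨hk, x, hx⟩ := Nat.find_spec h
  have := NeZero.of_pos hk
  refine ⟨_, hk, x, fun s t => ⟨fun hst => by_contra fun hne => ?_, ?_⟩⟩
  · obtain ⟨m, hm, hmk, y, hy⟩ := hx.exists_shorter hst hne
    exact Nat.find_min h hmk ⟨hm, y, hy⟩
  · rintro rfl
    exact hx s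

end ClosedWalk

section ChainSandwich

variable {U V : Type*} {M E' : U → V → Prop}

/-- In a 2K2-free graph containing `M` and contained in `E'`, if `Forces M E' a b` then the
neighbourhood of `b` is strictly smaller than that of `a`. -/
def Forces (M E' : U → V → Prop) (a b : U) : Prop :=
  ∃ w, M a w ∧ ¬E' b w

def IsInducedAltCycle (M E' : U → V → Prop) {k : ℕ} (x : ZMod k → U) (v : ZMod k → V) :
    Prop :=
  (∀ i j, M (x j) (v i) ↔ j = i) ∧ ∀ i j, ¬E' (x j) (v i) ↔ j = i + 1

lemma IsInducedCycle.exists_isInducedAltCycle {k : ℕ} {x : ZMod k → U}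
    (hx : IsInducedCycle (Forces M E') x) : ∃ v, IsInducedAltCycle M E' x v := by
  choose v hvM hvE using fun i => (hx i (i + 1)).mpr rfl
  refine ⟨v, fun i j => ⟨fun h => ?_, ?_⟩, fun i j => ⟨fun h => (hx i j).mp ⟨v i, hvM i, h⟩, ?_⟩⟩
  · exact (add_right_cancel ((hx j (i + 1)).mp ⟨v i, h, hvE i⟩)).symm
  · rintro rfl
    exact hvM _
  · rintro rfl
    exact hvE _

lemma exists_noInduced2K2_between_of_rank {β : Type*} [LinearOrder β] (r : U → β)
    (hr : ∀ a b, Forces M E' a b → r b < r a) :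
    ∃ E₁ : U → V → Prop, (∀ u w, M u w → E₁ u w) ∧ (∀ u w, E₁ u w → E' u w) ∧
      NoInduced2K2 E₁ := by
  refine ⟨fun u w => ∃ a, M a w ∧ r a ≤ r u, fun u w h => ⟨u, h, le_rfl⟩, ?_, ?_⟩
  · rintro u w ⟨a, haw, hle⟩
    by_contra huw
    exact (hr a u ⟨w, haw, huw⟩).not_ge hle
  · rintro ⟨u₁, u₂, w₁, w₂, ⟨a₁, h₁, hle₁⟩, ⟨a₂, h₂, hle₂⟩, hn₁, hn₂⟩
    rcases le_total (r u₁) (r u₂) with h | h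
    · exact hn₂ ⟨a₁, h₁, hle₁.trans h⟩
    · exact hn₁ ⟨a₂, h₂, hle₂.trans h⟩

lemma exists_noInduced2K2_between [Finite U] (hME : ∀ u w, M u w → E' u w)
    (hcyc : ∀ k, 1 < k → ∀ (x : ZMod k → U) (v : ZMod k → V), ¬IsInducedAltCycle M E' x v) :
    ∃ E₁ : U → V → Prop, (∀ u w, M u w → E₁ u w) ∧ (∀ u w, E₁ u w → E' u w) ∧
      NoInduced2K2 E₁ := by
  have hwf : WellFounded (flip (Forces M E')) := by
    by_contra hwf
    obtain ⟨k, hk, x, hx⟩ := exists_isInducedCycle (exists_closedWalk_of_not_wellFounded hwf)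
    obtain ⟨v, hM, hE'⟩ := hx.exists_isInducedAltCycle
    obtain rfl | hk := (by omega : k = 1 ∨ 1 < k)
    · exact (hE' 0 0).mpr (by decide) (hME _ _ ((hM 0 0).mpr rfl))
    · exact hcyc k hk x v ⟨hM, hE'⟩
  have : IsWellFounded U (flip (Forces M E')) := ⟨hwf⟩
  exact exists_noInduced2K2_between_of_rank (IsWellFounded.rank (flip (Forces M E')))
    fun _ _ h => IsWellFounded.rank_lt_of_rel h

end ChainSandwich

section Colouring

variable {U V : Type*} {E F Er Eb : U → V → Prop} {a b : U} {w w' : V}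

lemma Confl.symm (h : Confl E a w b w') : Confl E b w' a w :=
  ⟨h.2.1, h.1, h.2.2.2, h.2.2.1⟩

namespace Bipartition

lemma mem_of_red (hpart : Bipartition E Er Eb) (h : Er a w) : E a w := by
  obtain ⟨_, _, hc⟩ := (hpart.1 a w).mpr (Or.inl h)
  exact hc.1

lemma not_red_of_blue (hpart : Bipartition E Er Eb) (h : Eb a w) : ¬Er a w :=
  fun hr => hpart.2 a w ⟨hr, h⟩

lemma blue_of_confl (hpart : Bipartition E Er Eb) (h : Confl E a w b w') (hn : ¬Er a w) :
    Eb a w :=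
  ((hpart.1 a w).mp ⟨b, w', h⟩).resolve_left hn

lemma red_iff_not_red_of_confl (hpart : Bipartition E Er Eb) (hAr : NoA1 E Er)
    (hAb : NoA1 E Eb) (h : Confl E a w b w') : Er a w ↔ ¬Er b w' :=
  ⟨fun ha hb => hAr ⟨a, b, w, w', ha, hb, h.2.2⟩, fun hb => by_contra fun ha =>
    hAb ⟨a, b, w, w', hpart.blue_of_confl h ha, hpart.blue_of_confl h.symm hb, h.2.2⟩⟩

lemma exists_blue_confl_of_red (hpart : Bipartition E Er Eb) (hAr : NoA1 E Er) (h : Er a w) :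
    ∃ p q, Eb p q ∧ Confl E a w p q := by
  obtain ⟨p, q, hc⟩ := (hpart.1 a w).mpr (Or.inl h)
  exact ⟨p, q, hpart.blue_of_confl hc.symm fun hr => hAr ⟨a, p, w, q, h, hr, hc.2.2⟩, hc⟩

lemma red_cross_of_mem_F (hpart : Bipartition E Er Eb) (habc : ABCFree E F Er Eb)
    (hFE : ∀ u v, F u v → E u v) (hFb : ∀ u v, F u v → Committed E u v → Eb u v)
    {a b : U} {v v' : V} (hav : Er a v) (hbv' : Er b v') (hF : F b v) (hav' : E a v') :
    Er a v' := by
  obtain ⟨⟨hAr, hAb, hC⟩, hBr, hBb⟩ := habc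
  have hcolour : ∀ {a b : U} {w w' : V}, Confl E a w b w' → (Er a w ↔ ¬Er b w') :=
    hpart.red_iff_not_red_of_confl hAr hAb
  have hbv : E b v := hFE b v hF
  have hF_blue_confl : ∀ p q, Eb p q → ¬Confl E b v p q := fun p q hpq hc =>
    hAb ⟨b, p, v, q, hFb b v hF ⟨p, q, hc⟩, hpq, hc.2.2⟩
  obtain ⟨p, q, hpq_blue, -, hpq, haq, hpv⟩ := hpart.exists_blue_confl_of_red hAr hav
  obtain ⟨p', q', hp'q'_blue, -, hp'q', hbq', hp'v'⟩ := hpart.exists_blue_confl_of_red hAr hbv'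
  have hbq : E b q := by_contra fun h => hF_blue_confl p q hpq_blue ⟨hbv, hpq, h, hpv⟩
  have hp'v : E p' v := by_contra fun h => hF_blue_confl p' q' hp'q'_blue ⟨hbv, hp'q', hbq', h⟩
  have hp'q : E p' q := by
    by_contra h
    have hred : Er p' v :=
      (hcolour ⟨hp'v, hpq, h, hpv⟩).mpr (hpart.not_red_of_blue hpq_blue)
    exact hC ⟨p', b, v, v', hred, hbv', hp'v', hF⟩
  by_contra hav'_red
  have hp'q_red : Er p' q := (hcolour ⟨hp'q, hav', hp'v', haq⟩).mpr hav'_red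
  have hpq' : E p q' := by_contra fun h => hBb ⟨p, p', q, q', hpq_blue, hp'q'_blue, hp'q_red, h⟩
  have hpq'_red : Er p q' := (hcolour ⟨hpq', hbv, hpv, hbq'⟩).mpr
    (hpart.not_red_of_blue (hFb b v hF ⟨p, q', hbv, hpq', hbq', hpv⟩))
  have haq' : E a q' := by_contra fun h => hAr ⟨p, a, q', v, hpq'_red, hav, hpv, h⟩
  by_cases haq'_red : Er a q'
  · exact hBr ⟨a, p', q', q, haq'_red, hp'q_red, hp'q'_blue, haq⟩
  · have hbq_red : Er b q := (hcolour ⟨hbq, haq', hbq', haq⟩).mpr haq'_red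
    exact hBr ⟨b, p, q, q', hbq_red, hpq'_red, hpq_blue, hbq'⟩

/-- Length 2 gives two conflicting edges of one colour, length 3 a configuration (B), and length
at least 4 the two conflicting chords `x 1 v 2`, `x 3 v 0` of one colour. -/
lemma not_bicoloured_cycle (hpart : Bipartition E Er Eb) (hAr : NoA1 E Er) (hAb : NoA1 E Eb)
    (hBr : NoB1 E Er Eb) (hBb : NoB1 E Eb Er) {k : ℕ} (hk : 1 < k) {x : ZMod k → U}
    {v : ZMod k → V} (c : Prop) (hE : ∀ i j, ¬E (x j) (v i) ↔ j = i + 1)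
    (hdiag : ∀ i, Er (x i) (v i) ↔ c) (hoff : ∀ i j, j ≠ i → j ≠ i + 1 → (Er (x j) (v i) ↔ ¬c)) :
    False := by
  have confl : ∀ i j i' j', j ≠ i + 1 → j' ≠ i' + 1 → j = i' + 1 → j' = i + 1 →
      Confl E (x j) (v i) (x j') (v i') := fun i j i' j' h₁ h₂ h₃ h₄ =>
    ⟨not_not.mp ((hE i j).not.mpr h₁), not_not.mp ((hE i' j').not.mpr h₂),
      (hE i' j).mpr h₃, (hE i j').mpr h₄⟩
  have hcolour := fun {a w b w'} (h : Confl E a w b w') =>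
    hpart.red_iff_not_red_of_confl hAr hAb h
  obtain rfl | rfl | hk := (by omega : k = 2 ∨ k = 3 ∨ 4 ≤ k)
  · have h := hcolour (confl 0 0 1 1 (by decide) (by decide) (by decide) (by decide))
    rw [hdiag, hdiag] at h
    exact iff_not_self h
  · by_cases hc : c
    · have hx0v1 := confl 1 0 2 2 (by decide) (by decide) (by decide) (by decide)
      exact hBr ⟨x 1, x 0, v 1, v 0, (hdiag 1).mpr hc, (hdiag 0).mpr hc,
        hpart.blue_of_confl hx0v1 fun h => (hoff 1 0 (by decide) (by decide)).mp h hc,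
        (hE 0 1).mpr (by decide)⟩
    · have hx1v1 := confl 1 1 0 2 (by decide) (by decide) (by decide) (by decide)
      have hx0v0 := confl 0 0 2 1 (by decide) (by decide) (by decide) (by decide)
      exact hBb ⟨x 1, x 0, v 1, v 0, hpart.blue_of_confl hx1v1 (mt (hdiag 1).mp hc),
        hpart.blue_of_confl hx0v0 (mt (hdiag 0).mp hc),
        (hoff 1 0 (by decide) (by decide)).mpr hc, (hE 0 1).mpr (by decide)⟩
  · have hne : ∀ a b : ℕ, a < k → b < k → a ≠ b → (a : ZMod k) ≠ b := fun a b ha hb hab h =>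
      hab (by rwa [ZMod.natCast_eq_natCast_iff', Nat.mod_eq_of_lt ha, Nat.mod_eq_of_lt hb] at h)
    have h3 : (3 : ZMod k) = 2 + 1 := by norm_num
    have h13 : (1 : ZMod k) ≠ 3 := by exact_mod_cast hne 1 3 (by omega) (by omega) (by omega)
    have h12 : (1 : ZMod k) ≠ 2 := by exact_mod_cast hne 1 2 (by omega) (by omega) (by omega)
    have h30 : (3 : ZMod k) ≠ 0 := by exact_mod_cast hne 3 0 (by omega) (by omega) (by omega)
    have h1 : (1 : ZMod k) ≠ 2 + 1 := h3 ▸ h13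
    have h3' : (3 : ZMod k) ≠ 0 + 1 := by rw [zero_add]; exact h13.symm
    have h := hcolour (confl 2 1 0 3 h1 h3' (zero_add 1).symm h3)
    rw [hoff 2 1 h12 h1, hoff 0 3 h30 h3'] at h
    exact iff_not_self h

lemma not_isInducedAltCycle_red (hpart : Bipartition E Er Eb) (habc : ABCFree E F Er Eb)
    (hFE : ∀ u v, F u v → E u v) (hFb : ∀ u v, F u v → Committed E u v → Eb u v) {k : ℕ}
    (hk : 1 < k) (x : ZMod k → U) (v : ZMod k → V) :
    ¬IsInducedAltCycle Er (fun u w => E u w ∧ ¬F u w) x v := by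
  rintro ⟨hM, hE'⟩
  have ⟨⟨hAr, hAb, hC⟩, hBr, hBb⟩ := habc
  have : Fact (1 < k) := ⟨hk⟩
  have hnoF : ∀ i, ¬F (x (i + 1)) (v i) := by
    intro i hF
    have hE : E (x i) (v (i + 1)) := by_contra fun h =>
      hC ⟨x i, x (i + 1), v i, v (i + 1), (hM i i).mpr rfl, (hM _ _).mpr rfl, h, hF⟩
    have hred := hpart.red_cross_of_mem_F habc hFE hFb ((hM i i).mpr rfl)
      ((hM _ _).mpr rfl) hF hE
    exact one_ne_zero (left_eq_add.mp ((hM (i + 1) i).mp hred))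
  refine hpart.not_bicoloured_cycle hAr hAb hBr hBb hk True
    (fun i j => ⟨fun h => (hE' i j).mp fun h' => h h'.1, ?_⟩)
    (fun i => iff_true_intro ((hM i i).mpr rfl))
    (fun i j hji _ => iff_of_false ((hM i j).not.mpr hji) (not_not_intro trivial))
  rintro rfl h
  exact (hE' i (i + 1)).mpr rfl ⟨h, hnoF i⟩

lemma not_isInducedAltCycle_nonred (hpart : Bipartition E Er Eb) (hAr : NoA1 E Er)
    (hAb : NoA1 E Eb) (hBr : NoB1 E Er Eb) (hBb : NoB1 E Eb Er) {k : ℕ} (hk : 1 < k)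
    (x : ZMod k → U) (v : ZMod k → V) :
    ¬IsInducedAltCycle (fun u w => E u w ∧ ¬Er u w) E x v := by
  rintro ⟨hM, hE⟩
  refine hpart.not_bicoloured_cycle hAr hAb hBr hBb hk False hE
    (fun i => iff_false_intro ((hM i i).mpr rfl).2) (fun i j hji hji' => iff_of_true ?_ not_false)
  by_contra hred
  exact hji ((hM i j).mp ⟨not_not.mp ((hE i j).not.mpr hji'), hred⟩)

end Bipartition

end Colouring

theorem stmt12_general {U V : Type*} [Fintype U] (E F Er Eb : U → V → Prop)
    (hFE : ∀ u v, F u v → E u v)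
    (hpart : Bipartition E Er Eb) (habc : ABCFree E F Er Eb)
    (hFb : ∀ u v, F u v → Committed E u v → Eb u v) :
    ∃ E1 E2 : U → V → Prop, ChainCover E E1 E2 ∧ ∀ u v, ¬(E1 u v ∧ F u v) := by
  have ⟨⟨hAr, hAb, _⟩, hBr, hBb⟩ := habc
  obtain ⟨E1, hErE1, hE1, hE1_free⟩ :=
    exists_noInduced2K2_between (M := Er) (E' := fun u w => E u w ∧ ¬F u w)
      (fun u w h => ⟨hpart.mem_of_red h, fun hF =>
        hpart.not_red_of_blue (hFb u w hF ((hpart.1 u w).mpr (Or.inl h))) h⟩)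
      fun _ hk => hpart.not_isInducedAltCycle_red habc hFE hFb hk
  obtain ⟨E2, hE2', hE2, hE2_free⟩ :=
    exists_noInduced2K2_between (M := fun u w => E u w ∧ ¬Er u w) (E' := E) (fun _ _ h => h.1)
      fun _ hk => hpart.not_isInducedAltCycle_nonred hAr hAb hBr hBb hk
  refine ⟨E1, E2, ⟨fun u w h => (hE1 u w h).1, hE2, fun u w => ⟨fun h => ?_, ?_⟩,
    hE1_free, hE2_free⟩, fun u w h => (hE1 u w h.1).2 h.2⟩
  · by_cases hr : Er u w
    · exact Or.inl (hErE1 u w hr)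
    · exact Or.inr (hE2' u w ⟨h, hr⟩)
  · rintro (h | h)
    · exact (hE1 u w h).1
    · exact hE2 u w h

/-- If the committed edges of a finite bipartite graph admit an (A, B, C)-free
bipartition with all committed `F`-edges blue, then `G` has a 2-chain subgraph
cover whose first subgraph avoids `F`. -/
theorem stmt12 {U V : Type*} [Fintype U] [Fintype V] (E F Er Eb : U → V → Prop)
    (hFE : ∀ u v, F u v → E u v)
    (hpart : Bipartition E Er Eb) (habc : ABCFree E F Er Eb)
    (hFb : ∀ u v, F u v → Committed E u v → Eb u v) :
    ∃ E1 E2 : U → V → Prop, ChainCover E E1 E2 ∧ ∀ u v, ¬(E1 u v ∧ F u v) :=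
  stmt12_general E F Er Eb hFE hpart habc hFb
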